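/- Let G be a graph on n vertices with maximum degree Δ ≥ 1 and degeneracy Δ − 1, and let α be a (Δ+1)-colouring of G. Then there exists a Δ-colouring γ of G with d_{Δ+1}(α, γ) ≤ n². -/

import Mathlib

/-!
Fix a degeneracy ordering `r`, in which every vertex has at most `Δ - 1` neighbours of larger
rank, and clear the colour `Fin.last Δ` from the vertices in decreasing order of rank. A vertex
is *stuck* when all `Δ` other colours occur on its neighbours; as it has at most `Δ` of them,
each colour occurs exactly once, and at least one of them has smaller rank. So from `x` there is
a chain `x = z 0, z 1, …, z s` of stuck vertices of decreasing rank ending at a vertex `z s`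
with a free colour. Along a shortest such chain, recolour `z s` with its free colour and then
each `z i` with the old colour of `z (i + 1)`. This takes `s + 1 ≤ n` steps and touches only
vertices of rank at most `r x`, so `n` rounds need at most `n²` steps.
-/

/-- `G` is `p`-degenerate. -/
def Degenerate {V : Type} [Fintype V] [DecidableEq V] (G : SimpleGraph V)
    [DecidableRel G.Adj] (p : ℕ) : Prop :=
  ∀ S : Finset V, S.Nonempty → ∃ v ∈ S, (S.filter (G.Adj v)).card ≤ p

/-- `β` is reachable from `α` in the reconfiguration graph of proper
`Fin k`-colourings of `G` by a path of length at most `N`. -/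
def Reach {V : Type} {k : ℕ} (G : SimpleGraph V) (α β : V → Fin k) (N : ℕ) : Prop :=
  ∃ (m : ℕ) (f : ℕ → V → Fin k), m ≤ N ∧ f 0 = α ∧ f m = β ∧
    (∀ i, i ≤ m → ∀ u v, G.Adj u v → f i u ≠ f i v) ∧
    ∀ i, i < m → ∃! v, f i v ≠ f (i + 1) v

open Finset Function

variable {V : Type} {G : SimpleGraph V}

def IsProperColouring {α : Type*} (G : SimpleGraph V) (β : V → α) : Prop :=
  ∀ u v, G.Adj u v → β u ≠ β v

theorem IsProperColouring.update [DecidableEq V] {α : Type*} {β : V → α}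
    (hβ : IsProperColouring G β) {v : V} {c : α} (hc : ∀ w, G.Adj v w → β w ≠ c) :
    IsProperColouring G (update β v c) := by
  intro a b hab
  rcases eq_or_ne a v with rfl | ha
  · rw [update_self, update_of_ne (G.ne_of_adj hab).symm]
    exact (hc b hab).symm
  rcases eq_or_ne b v with rfl | hb
  · rw [update_self, update_of_ne ha]
    exact hc a hab.symm
  rw [update_of_ne ha, update_of_ne hb]
  exact hβ a b hab

namespace Reach

variable {k : ℕ} {α β γ : V → Fin k} {N M : ℕ}

theorem refl (hα : IsProperColouring G α) (N : ℕ) : Reach G α α N :=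
  ⟨0, fun _ => α, N.zero_le, rfl, rfl, fun _ _ => hα,
    fun _ hi => absurd hi (Nat.not_lt_zero _)⟩

theorem mono (h : Reach G α β N) (hNM : N ≤ M) : Reach G α β M := by
  obtain ⟨m, f, hm, h0, hend, hproper, hstep⟩ := h
  exact ⟨m, f, hm.trans hNM, h0, hend, hproper, hstep⟩

theorem isProperColouring_right (h : Reach G α β N) : IsProperColouring G β := by
  obtain ⟨m, f, -, -, rfl, hproper, -⟩ := h
  exact hproper m le_rfl

theorem trans (h₁ : Reach G α β N) (h₂ : Reach G β γ M) : Reach G α γ (N + M) := by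
  obtain ⟨m₁, f₁, hm₁, rfl, rfl, hp₁, hs₁⟩ := h₁
  obtain ⟨m₂, f₂, hm₂, h₂0, rfl, hp₂, hs₂⟩ := h₂
  set F : ℕ → V → Fin k := fun i => if i < m₁ then f₁ i else f₂ (i - m₁)
  have hF₁ : ∀ i ≤ m₁, F i = f₁ i := by
    intro i hi
    rcases hi.lt_or_eq with hi | rfl
    · exact if_pos hi
    · simp [F, h₂0]
  have hF₂ : ∀ i ≥ m₁, F i = f₂ (i - m₁) := fun i hi => if_neg hi.not_gt
  refine ⟨m₁ + m₂, F, by omega, hF₁ 0 (Nat.zero_le _), by simp [hF₂], fun i hi => ?_,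
    fun i hi => ?_⟩
  · rcases le_or_gt i m₁ with h | h
    · exact hF₁ i h ▸ hp₁ i h
    · exact hF₂ i h.le ▸ hp₂ (i - m₁) (by omega)
  · rcases lt_or_ge i m₁ with h | h
    · rw [hF₁ i h.le, hF₁ (i + 1) h]
      exact hs₁ i h
    · rw [hF₂ i h, hF₂ (i + 1) (by omega), show i + 1 - m₁ = i - m₁ + 1 by omega]
      exact hs₂ (i - m₁) (by omega)

theorem update_of_free [DecidableEq V] (hα : IsProperColouring G α) {v : V} {c : Fin k}
    (hcv : c ≠ α v) (hc : ∀ w, G.Adj v w → α w ≠ c) : Reach G α (update α v c) 1 := by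
  refine ⟨1, fun i => if i = 0 then α else update α v c, le_rfl, rfl, rfl, ?_, ?_⟩
  · intro i _
    dsimp only
    split_ifs
    exacts [hα, hα.update hc]
  · intro i hi
    obtain rfl : i = 0 := by omega
    refine ⟨v, by simpa using hcv.symm, fun w hw => ?_⟩
    by_contra hwv
    simp [update_of_ne hwv] at hw

end Reach

/-- `z s` takes the free colour `c`, then each `z i` in turn the old colour of `z (i + 1)`. -/
theorem exists_reach_shift_along_path [DecidableEq V] {k : ℕ} {β : V → Fin k}
    (hβ : IsProperColouring G β) (s : ℕ) (z : ℕ → V) (c : Fin k)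
    (hadj : ∀ i < s, G.Adj (z i) (z (i + 1)))
    (hinj : ∀ i j, i < j → j ≤ s → z i ≠ z j)
    (hind : ∀ i j, i + 2 ≤ j → j ≤ s → ¬ G.Adj (z i) (z j))
    (huniq : ∀ i < s, ∀ w, G.Adj (z i) w → β w = β (z (i + 1)) → w = z (i + 1))
    (hcs : c ≠ β (z s)) (hfree : ∀ w, G.Adj (z s) w → β w ≠ c) :
    ∃ β', Reach G β β' (s + 1) ∧ β' (z 0) ≠ β (z 0) ∧
      ∀ v, (∀ i ≤ s, v ≠ z i) → β' v = β v := by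
  induction s generalizing z with
  | zero =>
    exact ⟨_, Reach.update_of_free hβ hcs hfree, by simpa using hcs,
      fun v hv => update_of_ne (hv 0 le_rfl) _ _⟩
  | succ s ih =>
    obtain ⟨β₁, hR, hne, hframe⟩ := ih (fun i => z (i + 1))
      (fun i hi => hadj (i + 1) (by omega)) (fun i j hij hj => hinj _ _ (by omega) (by omega))
      (fun i j hij hj => hind _ _ (by omega) (by omega)) (fun i hi => huniq (i + 1) (by omega))
      hcs hfree
    have hz₀ : β₁ (z 0) = β (z 0) := hframe _ fun i _ => hinj 0 (i + 1) (by omega) (by omega)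
    have hfree₀ : ∀ w, G.Adj (z 0) w → β₁ w ≠ β (z 1) := by
      intro w hw
      by_cases hw₁ : w = z 1
      · exact hw₁ ▸ hne
      rw [hframe w ?_]
      · exact fun h => hw₁ (huniq 0 (by omega) w hw h)
      · rintro (_ | i) hi rfl
        exacts [hw₁ rfl, hind 0 (i + 2) (by omega) (by omega) hw]
    have hne₀ : β (z 1) ≠ β (z 0) := (hβ _ _ (hadj 0 (by omega))).symm
    refine ⟨update β₁ (z 0) (β (z 1)),
      hR.trans (Reach.update_of_free hR.isProperColouring_right (hz₀ ▸ hne₀) hfree₀),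
      by simpa using hne₀, fun v hv => ?_⟩
    rw [update_of_ne (hv 0 (by omega)), hframe v fun i hi => hv (i + 1) (by omega)]

theorem Degenerate.exists_order_on [Fintype V] [DecidableEq V] [DecidableRel G.Adj] {p : ℕ}
    (h : Degenerate G p) (S : Finset V) :
    ∃ r : V → ℕ, Set.InjOn r S ∧ (∀ v ∈ S, r v < #S) ∧
      ∀ v ∈ S, #{u ∈ S | G.Adj v u ∧ r v < r u} ≤ p := by
  induction S using Finset.strongInduction with
  | H S ih =>
  rcases S.eq_empty_or_nonempty with rfl | hS
  · exact ⟨fun _ => 0, by simp, by simp, by simp⟩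
  obtain ⟨v₀, hv₀, hdeg₀⟩ := h S hS
  obtain ⟨r, hinj, hlt, hlater⟩ := ih _ (erase_ssubset hv₀)
  have hcard : #(S.erase v₀) + 1 = #S := card_erase_add_one hv₀
  refine ⟨fun v => if v = v₀ then 0 else r v + 1, fun a ha b hb hab => ?_, fun v hv => ?_,
    fun v hv => ?_⟩
  · by_cases ha₀ : a = v₀ <;> by_cases hb₀ : b = v₀ <;>
      simp only [ha₀, hb₀, if_true, if_false] at hab
    · exact ha₀.trans hb₀.symm
    all_goals first
      | omega
      | exact hinj (mem_erase.2 ⟨ha₀, ha⟩) (mem_erase.2 ⟨hb₀, hb⟩) (by omega)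
  · dsimp only
    split_ifs with hv₀'
    · exact card_pos.2 hS
    · have := hlt v (mem_erase.2 ⟨hv₀', hv⟩)
      omega
  · by_cases hvv₀ : v = v₀
    · subst hvv₀
      refine (card_le_card fun u hu => ?_).trans hdeg₀
      simp only [mem_filter] at hu ⊢
      exact ⟨hu.1, hu.2.1⟩
    refine (card_le_card fun u hu => ?_).trans (hlater v (mem_erase.2 ⟨hvv₀, hv⟩))
    simp only [mem_filter, if_neg hvv₀, mem_erase] at hu ⊢
    obtain ⟨huS, hadj, hvu⟩ := hu
    split_ifs at hvu with hu₀
    · omega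
    · exact ⟨⟨hu₀, huS⟩, hadj, by omega⟩

theorem Degenerate.exists_order [Fintype V] [DecidableEq V] [DecidableRel G.Adj] {p : ℕ}
    (h : Degenerate G p) :
    ∃ r : V → ℕ, Injective r ∧ (∀ v, r v < Fintype.card V) ∧
      ∀ v, #{u ∈ G.neighborFinset v | r v < r u} ≤ p := by
  obtain ⟨r, hinj, hlt, hlater⟩ := h.exists_order_on univ
  refine ⟨r, fun a b hab => hinj (mem_univ a) (mem_univ b) hab, fun v => hlt v (mem_univ v),
    fun v => ?_⟩
  convert hlater v (mem_univ v) using 2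
  ext u
  simp

def Stuck {α : Type*} (G : SimpleGraph V) (β : V → α) (v : V) : Prop :=
  ∀ c, c ≠ β v → ∃ u, G.Adj v u ∧ β u = c

section Stuck

variable [Fintype V] [DecidableRel G.Adj] {α : Type*} [Fintype α] [DecidableEq α]
  {β : V → α} {v : V}

theorem Stuck.card_sub_one_le (hv : Stuck G β v) :
    Fintype.card α - 1 ≤ #((G.neighborFinset v).image β) := by
  calc Fintype.card α - 1 = #(univ.erase (β v)) := by
        rw [card_erase_of_mem (mem_univ _), card_univ]
    _ ≤ _ := card_le_card fun c hc => by
        obtain ⟨u, hu, rfl⟩ := hv c (ne_of_mem_erase hc)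
        exact mem_image_of_mem β ((G.mem_neighborFinset v u).2 hu)

theorem Stuck.injOn (hv : Stuck G β v) (hdeg : G.degree v ≤ Fintype.card α - 1) :
    Set.InjOn β (G.neighborFinset v) := by
  rw [← card_image_iff]
  exact card_image_le.antisymm (G.card_neighborFinset_eq_degree v ▸ hdeg.trans hv.card_sub_one_le)

theorem Stuck.exists_adj_lt {r : V → ℕ} (hv : Stuck G β v) (hr : Injective r)
    (hlater : #{u ∈ G.neighborFinset v | r v < r u} < Fintype.card α - 1) :
    ∃ u, G.Adj v u ∧ r u < r v := by
  by_contra! h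
  have hall : {u ∈ G.neighborFinset v | r v < r u} = G.neighborFinset v :=
    filter_true_of_mem fun u hu =>
      have hvu := (G.mem_neighborFinset v u).1 hu
      (h u hvu).lt_of_ne (hr.ne (G.ne_of_adj hvu))
  rw [hall] at hlater
  exact (hv.card_sub_one_le.trans card_image_le).not_gt hlater

end Stuck

def IsStuckChain {α : Type*} (G : SimpleGraph V) (r : V → ℕ) (β : V → α) (s : ℕ)
    (z : ℕ → V) : Prop :=
  (∀ i < s, G.Adj (z i) (z (i + 1)) ∧ r (z (i + 1)) < r (z i) ∧ Stuck G β (z i)) ∧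
    ¬ Stuck G β (z s)

namespace IsStuckChain

variable {α : Type*} {r : V → ℕ} {β : V → α} {s : ℕ} {z : ℕ → V}

theorem rank_add_le (hz : IsStuckChain G r β s z) {i j : ℕ} (hij : i ≤ j) (hj : j ≤ s) :
    r (z j) + (j - i) ≤ r (z i) := by
  induction j, hij using Nat.le_induction with
  | base => simp
  | succ j hij ih =>
    have := (hz.1 j (by omega)).2.1
    have := ih (by omega)
    omega

theorem rank_lt (hz : IsStuckChain G r β s z) {i j : ℕ} (hij : i < j) (hj : j ≤ s) :
    r (z j) < r (z i) := by
  have := hz.rank_add_le hij.le hj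
  omega

/-- A shortest stuck chain is an induced path: a chord from `z i` to `z j` would cut out
`z (i + 1), …, z (j - 1)`. -/
theorem not_adj_of_minimal (hz : IsStuckChain G r β s z)
    (hmin : ∀ s' z', z' 0 = z 0 → IsStuckChain G r β s' z' → s ≤ s')
    {i j : ℕ} (hij : i + 2 ≤ j) (hj : j ≤ s) : ¬ G.Adj (z i) (z j) := by
  intro hadj
  set d := j - i - 1
  set z' : ℕ → V := fun k => if k ≤ i then z k else z (k + d)
  have hz' : IsStuckChain G r β (s - d) z' := by
    refine ⟨fun k hk => ?_, ?_⟩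
    · rcases lt_trichotomy k i with hki | rfl | hki
      · simp only [z', if_pos hki.le, if_pos (show k + 1 ≤ i by omega)]
        exact hz.1 k (by omega)
      · simp only [z', le_refl, if_true, if_neg (show ¬ k + 1 ≤ k by omega),
          show k + 1 + d = j by omega]
        exact ⟨hadj, hz.rank_lt (by omega) hj, (hz.1 k (by omega)).2.2⟩
      · simp only [z', if_neg (show ¬ k ≤ i by omega), if_neg (show ¬ k + 1 ≤ i by omega),
          show k + 1 + d = k + d + 1 by omega]
        exact hz.1 (k + d) (by omega)
    · simp only [z', if_neg (show ¬ s - d ≤ i by omega), show s - d + d = s by omega]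
      exact hz.2
  have := hmin (s - d) z' (by simp [z']) hz'
  omega

end IsStuckChain

section Recolour

variable [Fintype V] [DecidableRel G.Adj] {Δ : ℕ} {r : V → ℕ}

theorem exists_isStuckChain (hr : Injective r)
    (hlater : ∀ v, #{u ∈ G.neighborFinset v | r v < r u} < Δ) (β : V → Fin (Δ + 1))
    (x : V) :
    ∃ s z, z 0 = x ∧ IsStuckChain G r β s z := by
  induction hx : r x using Nat.strong_induction_on generalizing x with
  | _ n ih =>
  by_cases hst : Stuck G β x
  · obtain ⟨y, hxy, hyx⟩ := hst.exists_adj_lt hr (by simpa using hlater x)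
    obtain ⟨s, z, rfl, hz⟩ := ih _ (hx ▸ hyx) y rfl
    refine ⟨s + 1, fun | 0 => x | i + 1 => z i, rfl, fun i hi => ?_, hz.2⟩
    rcases i with _ | i
    · exact ⟨hxy, hyx, hst⟩
    · exact hz.1 i (by omega)
  · exact ⟨0, fun _ => x, rfl, fun i hi => absurd hi (Nat.not_lt_zero _), hst⟩

theorem exists_reach_ne_at [DecidableEq V] (hr : Injective r) (hdeg : ∀ v, G.degree v ≤ Δ)
    (hlater : ∀ v, #{u ∈ G.neighborFinset v | r v < r u} < Δ) {β : V → Fin (Δ + 1)}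
    (hβ : IsProperColouring G β) (x : V) :
    ∃ β', Reach G β β' (r x + 1) ∧ β' x ≠ β x ∧ ∀ v, r x < r v → β' v = β v := by
  classical
  have hex : ∃ s z, z 0 = x ∧ IsStuckChain G r β s z := exists_isStuckChain hr hlater β x
  obtain ⟨z, hz₀, hz⟩ := Nat.find_spec hex
  set s := Nat.find hex
  have hmin : ∀ s' z', z' 0 = z 0 → IsStuckChain G r β s' z' → s ≤ s' :=
    fun s' z' h h' => Nat.find_min' hex ⟨z', h.trans hz₀, h'⟩
  obtain ⟨c, hcs, hfree⟩ : ∃ c, c ≠ β (z s) ∧ ∀ w, G.Adj (z s) w → β w ≠ c := by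
    simpa [Stuck] using hz.2
  have huniq : ∀ i < s, ∀ w, G.Adj (z i) w → β w = β (z (i + 1)) → w = z (i + 1) :=
    fun i hi w hw hβw => (hz.1 i hi).2.2.injOn (by simpa using hdeg _)
      ((G.mem_neighborFinset _ _).2 hw) ((G.mem_neighborFinset _ _).2 (hz.1 i hi).1) hβw
  obtain ⟨β', hR, hne, hframe⟩ := exists_reach_shift_along_path hβ s z c
    (fun i hi => (hz.1 i hi).1) (fun i j hij hj h => (hz.rank_lt hij hj).ne (h ▸ rfl))
    (fun i j hij hj => hz.not_adj_of_minimal hmin hij hj) huniq hcs hfree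
  have hrank : ∀ i ≤ s, r (z i) + i ≤ r x := fun i hi => by
    simpa [hz₀] using hz.rank_add_le (Nat.zero_le i) hi
  refine ⟨β', hR.mono (by have := hrank s le_rfl; omega), hz₀ ▸ hne,
    fun v hv => hframe v ?_⟩
  rintro i hi rfl
  have := hrank i hi
  omega

theorem exists_reach_ne_last [DecidableEq V] (hr : Injective r) (hdeg : ∀ v, G.degree v ≤ Δ)
    (hlater : ∀ v, #{u ∈ G.neighborFinset v | r v < r u} < Δ) {α : V → Fin (Δ + 1)}
    (hα : IsProperColouring G α)
    (hrn : ∀ v, r v < Fintype.card V) (k : ℕ) :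
    ∃ β, Reach G α β (k * Fintype.card V) ∧
      ∀ v, Fintype.card V - k ≤ r v → β v ≠ Fin.last Δ := by
  set n := Fintype.card V
  induction k with
  | zero => exact ⟨α, Reach.refl hα _, fun v hv => absurd (hrn v) (by omega)⟩
  | succ k ih =>
  obtain ⟨β, hR, hlast⟩ := ih
  have hn : (k + 1) * n = k * n + n := Nat.succ_mul k n
  by_cases hx : ∃ x, r x = n - (k + 1) ∧ β x = Fin.last Δ
  · obtain ⟨x, hxr, hx⟩ := hx
    obtain ⟨β', hR', hne, hframe⟩ :=
      exists_reach_ne_at hr hdeg hlater hR.isProperColouring_right x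
    refine ⟨β', (hR.trans hR').mono (by have := hrn x; omega), fun v hv => ?_⟩
    rcases eq_or_ne v x with rfl | hvx
    · exact hx ▸ hne
    have := hr.ne hvx
    rw [hframe v (by omega)]
    exact hlast v (by omega)
  · refine ⟨β, hR.mono (by omega), fun v hv => ?_⟩
    rcases eq_or_ne (r v) (n - (k + 1)) with hv' | hv'
    · exact fun h => hx ⟨v, hv', h⟩
    · exact hlast v (by omega)

end Recolour

theorem degenerate_reach_delta_colouring_general {V : Type} [Fintype V] [DecidableEq V]
    (G : SimpleGraph V) [DecidableRel G.Adj] (Δ : ℕ) (hΔ : 1 ≤ Δ)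
    (hmax : G.maxDegree = Δ)
    (hdeg : Degenerate G (Δ - 1))
    (α : V → Fin (Δ + 1)) (hα : ∀ u v, G.Adj u v → α u ≠ α v) :
    ∃ γ : V → Fin (Δ + 1), (∀ u v, G.Adj u v → γ u ≠ γ v) ∧
      (∀ v, (γ v : ℕ) < Δ) ∧ Reach G α γ (Fintype.card V ^ 2) := by
  obtain ⟨r, hr, hrn, hlater⟩ := hdeg.exists_order
  obtain ⟨γ, hR, hγ⟩ := exists_reach_ne_last hr (fun v => hmax ▸ G.degree_le_maxDegree v)
    (fun v => (hlater v).trans_lt (by omega)) hα hrn (Fintype.card V)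
  exact ⟨γ, hR.isProperColouring_right, fun v => Fin.val_lt_last (hγ v (by omega)),
    by simpa [sq] using hR⟩

/-- Lemma 10: if G has maximum degree Δ ≥ 1 and degeneracy Δ - 1
(it is (Δ-1)-degenerate and no smaller d works), then from any (Δ+1)-colouring α
one can reach a Δ-colouring γ with d_{Δ+1}(α, γ) ≤ n². -/
theorem degenerate_reach_delta_colouring {V : Type} [Fintype V] [DecidableEq V]
    (G : SimpleGraph V) [DecidableRel G.Adj] (Δ : ℕ) (hΔ : 1 ≤ Δ)
    (hmax : G.maxDegree = Δ)
    (hdeg : Degenerate G (Δ - 1)) (hleast : ∀ d : ℕ, Degenerate G d → Δ - 1 ≤ d)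
    (α : V → Fin (Δ + 1)) (hα : ∀ u v, G.Adj u v → α u ≠ α v) :
    ∃ γ : V → Fin (Δ + 1), (∀ u v, G.Adj u v → γ u ≠ γ v) ∧
      (∀ v, (γ v : ℕ) < Δ) ∧ Reach G α γ (Fintype.card V ^ 2) :=
  degenerate_reach_delta_colouring_general G Δ hΔ hmax hdeg α hα
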